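/- arXiv:2412.00589 — 6 statements merged into one kernel-verified Lean document; each statement's English description precedes it below -/
import Mathlib

section
/- Let V be a completely metrizable topological vector space, and let S₁, S₂ ⊆ V be prevalent Borel sets. Then S₁ ∩ S₂ is prevalent. -/
open MeasureTheory

/-- `E` is a probe space for `S`: expanding in some basis of `E`, for every
`v ∈ V` we have `v + e ∈ S` for Lebesgue-almost every `e ∈ E`. -/
def IsProbeOn {V : Type*} [AddCommGroup V] [Module ℝ V]
    (S : Set V) (E : Submodule ℝ V) : Prop :=
  ∃ (k : ℕ) (b : Module.Basis (Fin k) ℝ E),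
    ∀ v : V, ∀ᵐ a : Fin k → ℝ, v + ∑ i, a i • (b i : V) ∈ S

/-- A Borel set `S` in a topological vector space is prevalent if it admits a
finite-dimensional probe space. -/
def Prevalent {V : Type*} [AddCommGroup V] [Module ℝ V] [TopologicalSpace V]
    [MeasurableSpace V] (S : Set V) : Prop :=
  MeasurableSet S ∧
    ∃ E : Submodule ℝ V, FiniteDimensional ℝ E ∧ IsProbeOn S E

/-- Fubini lemma: if every translate of the range of `L` meets `S'` in a set of
full measure (in the `L`-parameter), then `S'` has full measure. -/
lemma core_full {m k : ℕ} {S' : Set (Fin m → ℝ)} (hS' : MeasurableSet S')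
    {L : (Fin k → ℝ) → (Fin m → ℝ)} (hL : Measurable L)
    (h : ∀ x, ∀ᵐ a : Fin k → ℝ, x + L a ∈ S') : ∀ᵐ y : Fin m → ℝ, y ∈ S' := by
  set μ : Measure (Fin m → ℝ) := volume with hμ
  set ν : Measure (Fin k → ℝ) := volume with hν
  set A : Set ((Fin m → ℝ) × (Fin k → ℝ)) := {p | p.1 + L p.2 ∈ S'ᶜ} with hAdef
  have hA : MeasurableSet A :=
    (measurable_fst.add (hL.comp measurable_snd)) hS'.compl
  have h1 : (μ.prod ν) A = 0 := by
    rw [Measure.prod_apply hA]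
    have hz : ∀ x, ν (Prod.mk x ⁻¹' A) = 0 := by
      intro x
      have hx := h x
      rw [ae_iff] at hx
      convert hx using 2
      rfl
    simp [hz]
  have h2 : ∫⁻ a, μ ((fun x => (x, a)) ⁻¹' A) ∂ν = 0 := by
    rw [← Measure.prod_apply_symm hA]; exact h1
  have hconst : ∀ a, μ ((fun x => (x, a)) ⁻¹' A) = μ S'ᶜ := by
    intro a
    have : (fun x => (x, a)) ⁻¹' A = (· + L a) ⁻¹' S'ᶜ := rfl
    rw [this, measure_preimage_add_right]
  simp only [hconst, lintegral_const] at h2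
  have hν0 : ν Set.univ ≠ 0 := IsOpen.measure_ne_zero ν isOpen_univ Set.univ_nonempty
  have : μ S'ᶜ = 0 := by
    rcases mul_eq_zero.mp h2 with h | h
    · exact h
    · exact absurd h hν0
  rw [ae_iff]
  simpa [Set.compl_def] using this

/-- A probe property transfers from a subspace to any finite-dimensional
subspace containing it, in any basis of the bigger subspace. -/
lemma probe_ext {V : Type*} [AddCommGroup V] [Module ℝ V] [TopologicalSpace V]
    [IsTopologicalAddGroup V] [ContinuousSMul ℝ V]
    [MeasurableSpace V] [BorelSpace V]
    {S : Set V} (hS : MeasurableSet S) {E F : Submodule ℝ V}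
    (hEF : E ≤ F) [FiniteDimensional ℝ F]
    {k : ℕ} (b : Module.Basis (Fin k) ℝ E)
    (hb : ∀ v : V, ∀ᵐ a : Fin k → ℝ, v + ∑ i, a i • (b i : V) ∈ S)
    {m : ℕ} (c : Module.Basis (Fin m) ℝ F) :
    ∀ v : V, ∀ᵐ x : Fin m → ℝ, v + ∑ i, x i • (c i : V) ∈ S := by
  intro v
  have : FiniteDimensional ℝ E := Submodule.finiteDimensional_of_le hEF
  set L : (Fin k → ℝ) →ₗ[ℝ] (Fin m → ℝ) :=
    (c.equivFun.toLinearMap.comp (Submodule.inclusion hEF)).comp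
      b.equivFun.symm.toLinearMap with hLdef
  have hLcont : Continuous L := L.continuous_of_finiteDimensional
  have hcont : Continuous fun y : Fin m → ℝ => v + ∑ i, y i • (c i : V) := by
    apply continuous_const.add
    exact continuous_finset_sum _ fun i _ =>
      (continuous_apply i).smul continuous_const
  set S' : Set (Fin m → ℝ) := {y | v + ∑ i, y i • (c i : V) ∈ S} with hS'def
  have hS' : MeasurableSet S' := hcont.measurable hS
  have key : ∀ x a, v + ∑ i, (x + L a) i • (c i : V)
      = (v + ∑ i, x i • (c i : V)) + ∑ i, a i • (b i : V) := by
    intro x a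
    have e1 : ∀ y : Fin m → ℝ, ∑ i, y i • (c i : V) = ((c.equivFun.symm y : F) : V) := by
      intro y
      rw [Module.Basis.equivFun_symm_apply]
      push_cast
      rfl
    have e2 : ∑ i, a i • (b i : V) = ((b.equivFun.symm a : E) : V) := by
      rw [Module.Basis.equivFun_symm_apply]
      push_cast
      rfl
    have hLa : c.equivFun.symm (L a)
        = Submodule.inclusion hEF (b.equivFun.symm a) := by
      rw [hLdef]
      simp only [LinearMap.coe_comp, Function.comp_apply, LinearEquiv.coe_coe,
        LinearMap.coe_comp]
      exact c.equivFun.symm_apply_apply _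
    have hsplit : c.equivFun.symm (x + L a)
        = c.equivFun.symm x + Submodule.inclusion hEF (b.equivFun.symm a) := by
      rw [map_add, hLa]
    rw [e1, e1, e2, hsplit]
    push_cast
    rw [Submodule.coe_inclusion, add_assoc]
  have hslice : ∀ x, ∀ᵐ a : Fin k → ℝ, x + L a ∈ S' := by
    intro x
    filter_upwards [hb (v + ∑ i, x i • (c i : V))] with a ha
    show v + ∑ i, (x + L a) i • (c i : V) ∈ S
    rw [key x a]
    exact ha
  exact core_full hS' hLcont.measurable hslice

/-- The intersection of two prevalent Borel subsets of a completely metrizable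
topological vector space is prevalent. -/
theorem prevalent_inter
    {V : Type*} [AddCommGroup V] [Module ℝ V] [TopologicalSpace V]
    [IsTopologicalAddGroup V] [ContinuousSMul ℝ V]
    [MeasurableSpace V] [BorelSpace V]
    (hcm : ∃ m : MetricSpace V,
      m.toUniformSpace.toTopologicalSpace = ‹TopologicalSpace V› ∧
      @CompleteSpace V m.toUniformSpace)
    (S₁ S₂ : Set V) (h₁ : Prevalent S₁) (h₂ : Prevalent S₂) :
    Prevalent (S₁ ∩ S₂) := by
  obtain ⟨hm₁, E₁, hfd₁, k₁, b₁, hb₁⟩ := h₁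
  obtain ⟨hm₂, E₂, hfd₂, k₂, b₂, hb₂⟩ := h₂
  have inst : FiniteDimensional ℝ (E₁ ⊔ E₂ : Submodule ℝ V) :=
    Submodule.finiteDimensional_sup E₁ E₂
  refine ⟨hm₁.inter hm₂, E₁ ⊔ E₂, inst, ?_⟩
  set c := Module.finBasis ℝ (E₁ ⊔ E₂ : Submodule ℝ V)
  refine ⟨_, c, fun v => ?_⟩
  filter_upwards [probe_ext hm₁ le_sup_left b₁ hb₁ c v,
    probe_ext hm₂ le_sup_right b₂ hb₂ c v] with x hx1 hx2
  exact ⟨hx1, hx2⟩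
end

section
/- Let U ⊆ ℝⁿ be open, A ⊆ U compact, and k ∈ ℕ. The set of maps f ∈ C¹(U, ℝᵏ) that are injective on A is a Borel subset of C¹(U, ℝᵏ) with respect to the topology of C¹ convergence on compact subsets. In fact, it is a countable intersection of open sets (a Gδ set). -/
/-! A map is injective on the compact set `K` iff, for every `m`, it separates all pairs in the
compact set `{(x, y) ∈ K × K | 1 / (m + 1) ≤ dist x y}`. Separating the pairs of a compact set
`C` is an open condition for uniform convergence on compacta: `p ↦ dist (f p.1) (f p.2)` has a
positive minimum `δ` on `C`, and any `g` that is `δ / 2`-close to `f` on the projections of `C`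
still separates them. -/

open Set Filter Topology

namespace ContinuousMap

theorem isOpen_setOf_forall_ne_of_isCompact {X Y : Type*} [TopologicalSpace X] [MetricSpace Y]
    {C : Set (X × X)} (hC : IsCompact C) :
    IsOpen {f : C(X, Y) | ∀ p ∈ C, f p.1 ≠ f p.2} := by
  refine isOpen_iff_mem_nhds.2 fun f hf ↦ ?_
  obtain ⟨δ, hδ, hδC⟩ := hC.exists_forall_le' (f := fun p ↦ dist (f p.1) (f p.2))
    (by fun_prop) fun p hp ↦ dist_pos.2 (hf p hp)
  have hK : IsCompact (Prod.fst '' C ∪ Prod.snd '' C) :=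
    (hC.image continuous_fst).union (hC.image continuous_snd)
  have hV := (Metric.uniformity_basis_dist.compactConvergenceUniformity (α := X) (β := Y))
    |>.mem_of_mem (i := (Prod.fst '' C ∪ Prod.snd '' C, δ / 2)) ⟨hK, half_pos hδ⟩
  refine UniformSpace.mem_nhds_iff.2 ⟨_, hV, fun g hg p hp hgp ↦ ?_⟩
  have h₁ : dist (f p.1) (g p.1) < δ / 2 := hg p.1 (.inl (mem_image_of_mem _ hp))
  have h₂ : dist (g p.1) (f p.2) < δ / 2 := by
    rw [hgp, dist_comm]
    exact hg p.2 (.inr (mem_image_of_mem _ hp))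
  linarith [hδC p hp, dist_triangle (f p.1) (g p.1) (f p.2)]

theorem isGδ_setOf_injOn {X Y : Type*} [MetricSpace X] [MetricSpace Y] {K : Set X}
    (hK : IsCompact K) : IsGδ {f : C(X, Y) | InjOn f K} := by
  let C (m : ℕ) : Set (X × X) := K ×ˢ K ∩ {p | 1 / (m + 1 : ℝ) ≤ dist p.1 p.2}
  have hC (m : ℕ) : IsCompact (C m) :=
    (hK.prod hK).inter_right (isClosed_le continuous_const continuous_dist)
  have hinj : {f : C(X, Y) | InjOn f K} = ⋂ m, {f : C(X, Y) | ∀ p ∈ C m, f p.1 ≠ f p.2} := by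
    ext f
    simp only [mem_iInter, mem_ofPred_eq]
    refine ⟨fun hf m p ⟨⟨hp₁, hp₂⟩, hp⟩ hfp ↦ ?_, fun hf x hx y hy hfxy ↦ ?_⟩
    · simp only [mem_ofPred_eq, hf hp₁ hp₂ hfp, dist_self] at hp
      exact (Nat.one_div_pos_of_nat.trans_le hp).false
    · by_contra hxy
      obtain ⟨m, hm⟩ := exists_nat_one_div_lt (dist_pos.2 hxy)
      exact hf m (x, y) ⟨⟨hx, hy⟩, hm.le⟩ hfxy
  rw [hinj]
  exact .iInter_of_isOpen fun m ↦ isOpen_setOf_forall_ne_of_isCompact (hC m)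

end ContinuousMap

theorem isGδ_injOn_compact_general
    {n k : ℕ} (U : Set (EuclideanSpace ℝ (Fin n)))
    (A : Set (EuclideanSpace ℝ (Fin n))) (hA : IsCompact A) (hAU : A ⊆ U) :
    IsGδ {f : C(↥U, EuclideanSpace ℝ (Fin k)) |
        Set.InjOn f (Subtype.val ⁻¹' A)} ∧
      @MeasurableSet _ (borel C(↥U, EuclideanSpace ℝ (Fin k)))
        {f : C(↥U, EuclideanSpace ℝ (Fin k)) |
          Set.InjOn f (Subtype.val ⁻¹' A)} := by
  have hK : IsCompact (Subtype.val ⁻¹' A : Set U) := by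
    rwa [Subtype.isCompact_iff, Subtype.image_preimage_coe, inter_eq_right.2 hAU]
  have hGδ := ContinuousMap.isGδ_setOf_injOn (Y := EuclideanSpace ℝ (Fin k)) hK
  let := borel C(↥U, EuclideanSpace ℝ (Fin k))
  have : BorelSpace C(↥U, EuclideanSpace ℝ (Fin k)) := ⟨rfl⟩
  exact ⟨hGδ, hGδ.measurableSet⟩

/-- Let `U ⊆ ℝⁿ` be open and `A ⊆ U` compact.  In the space of (continuously
differentiable) maps `U → ℝᵏ`, endowed with the topology of (C¹) convergence on
compact subsets of `U` (here realized as the compact-open topology on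
continuous maps, which the C¹ topology refines), the set of maps that are
injective on `A` is a Gδ set, and in particular a Borel set. -/
theorem isGδ_injOn_compact
    {n k : ℕ} (U : Set (EuclideanSpace ℝ (Fin n))) (hU : IsOpen U)
    (A : Set (EuclideanSpace ℝ (Fin n))) (hA : IsCompact A) (hAU : A ⊆ U) :
    IsGδ {f : C(↥U, EuclideanSpace ℝ (Fin k)) |
        Set.InjOn f (Subtype.val ⁻¹' A)} ∧
      @MeasurableSet _ (borel C(↥U, EuclideanSpace ℝ (Fin k)))
        {f : C(↥U, EuclideanSpace ℝ (Fin k)) |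
          Set.InjOn f (Subtype.val ⁻¹' A)} :=
  isGδ_injOn_compact_general U A hA hAU
end

section
/- Let S, T : U → U be continuous maps on an open set U ⊆ ℝⁿ, μ a Borel probability measure on U with compact support. Suppose x* lies in the basin of attraction B_{μ,T}, meaning that for every continuous function φ on U, (1/N)Σ_{k=0}^{N−1} φ(Tᵏ(x*)) → ∫ φ dμ as N → ∞. If Sᵏ(x*) = Tᵏ(x*) for all k ∈ ℕ, then S = T everywhere on supp(μ). -/
open MeasureTheory Filter

/-- Support of a Borel measure. -/
def msupport {X : Type*} [TopologicalSpace X] [MeasurableSpace X]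
    (μ : Measure X) : Set X :=
  {x | ∀ O : Set X, IsOpen O → x ∈ O → 0 < μ O}

/-- If `S, T : U → U` are continuous, `μ` is a compactly supported Borel
probability measure, `x*` lies in the basin of attraction of `μ` for `T`,
and the `S`- and `T`-orbits of `x*` coincide, then `S = T` on `supp μ`. -/
theorem eq_on_support_of_orbit_agreement
    {n : ℕ} (U : Set (EuclideanSpace ℝ (Fin n))) (hU : IsOpen U)
    (S T : ↥U → ↥U) (hS : Continuous S) (hT : Continuous T)
    (μ : Measure ↥U) [IsProbabilityMeasure μ]
    (hcpt : IsCompact (msupport μ))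
    (xstar : ↥U)
    (hbasin : ∀ φ : C(↥U, ℝ),
      Tendsto (fun N : ℕ => (N : ℝ)⁻¹ * ∑ k ∈ Finset.range N, φ ((T)^[k] xstar))
        atTop (nhds (∫ x, φ x ∂μ)))
    (horbit : ∀ k : ℕ, S^[k] xstar = T^[k] xstar) :
    ∀ x ∈ msupport μ, S x = T x := by
  intro x hx
  by_contra hne
  set c : ℝ := dist (S x) (T x) / 2 with hc
  have hcpos : 0 < c := by
    have : 0 < dist (S x) (T x) := dist_pos.mpr hne
    positivity
  -- the test function
  set φ : C(↥U, ℝ) := ⟨fun y => min (dist (S y) (T y)) c, by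
    exact Continuous.min (Continuous.dist hS hT) continuous_const⟩ with hφ
  have hφnonneg : ∀ y, 0 ≤ φ y := fun y =>
    le_min dist_nonneg hcpos.le
  have hφle : ∀ y, φ y ≤ c := fun y => min_le_right _ _
  -- φ vanishes along the orbit
  have horb0 : ∀ k : ℕ, φ (T^[k] xstar) = 0 := by
    intro k
    have h1 : S (T^[k] xstar) = T (T^[k] xstar) := calc
      S (T^[k] xstar) = S (S^[k] xstar) := by rw [horbit]
      _ = S^[k+1] xstar := (Function.iterate_succ_apply' S k xstar).symm
      _ = T^[k+1] xstar := horbit _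
      _ = T (T^[k] xstar) := Function.iterate_succ_apply' T k xstar
    simp [hφ, h1, hcpos.le]
  -- hence the Birkhoff averages are 0, so the integral is 0
  have hint0 : ∫ y, φ y ∂μ = 0 := by
    have h0 : Tendsto (fun N : ℕ =>
        (N : ℝ)⁻¹ * ∑ k ∈ Finset.range N, φ ((T)^[k] xstar)) atTop (nhds 0) := by
      have : (fun N : ℕ =>
          (N : ℝ)⁻¹ * ∑ k ∈ Finset.range N, φ ((T)^[k] xstar)) = fun _ => (0 : ℝ) := by
        funext N
        simp [horb0]
      rw [this]
      exact tendsto_const_nhds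
    exact tendsto_nhds_unique (hbasin φ) h0
  -- φ is integrable (bounded by c, probability measure)
  have hmeas : AEStronglyMeasurable (fun y => φ y) μ := φ.continuous.aestronglyMeasurable
  have hintg : Integrable (fun y => φ y) μ := by
    refine (integrable_const c).mono' hmeas ?_
    filter_upwards with y
    rw [Real.norm_eq_abs, abs_of_nonneg (hφnonneg y)]
    exact hφle y
  -- the set where dist > c is open, contains x, has positive measure
  set O : Set ↥U := {y | c < dist (S y) (T y)} with hO
  have hOopen : IsOpen O := isOpen_lt continuous_const (Continuous.dist hS hT)
  have hxO : x ∈ O := by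
    simp only [hO, Set.mem_setOf_eq, hc]
    have : 0 < dist (S x) (T x) := dist_pos.mpr hne
    linarith
  have hμO : 0 < μ O := hx O hOopen hxO
  -- on O, φ = c, so ∫ φ ≥ c * μ O > 0, contradiction
  have hOc : ∀ y ∈ O, φ y = c := by
    intro y hy
    exact min_eq_right (le_of_lt hy)
  have hsetint : ∫ y in O, φ y ∂μ = c * (μ O).toReal := by
    rw [setIntegral_congr_fun hOopen.measurableSet hOc]
    simp [mul_comm, measureReal_def]
  have hle : ∫ y in O, φ y ∂μ ≤ ∫ y, φ y ∂μ := by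
    apply setIntegral_le_integral hintg
    filter_upwards with y using hφnonneg y
  have hμOfin : μ O < ⊤ := lt_of_le_of_lt (measure_mono (Set.subset_univ _))
    (by simp [measure_lt_top])
  have hpos : 0 < c * (μ O).toReal := by
    apply mul_pos hcpos
    exact ENNReal.toReal_pos hμO.ne' hμOfin.ne
  rw [hint0] at hle
  rw [hsetint] at hle
  linarith
end

section
/- Let T, S : U → U be diffeomorphisms of an open set U ⊆ ℝⁿ, and suppose μ is a Borel probability measure on U that is both T-invariant and S-invariant with compact support. Let Y : U → ℝᵐ be a C¹ map that is injective on supp(μ). If the pushforward measures satisfy (Y, Y∘T)#μ = (Y, Y∘S)#μ as measures on ℝ^{2m}, then T = S on supp(μ). -/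
/-!
A continuous map sends the support of a compactly supported measure onto the support of the
pushforward. Hence `(Y x, Y (T x))` is of the form `(Y y, Y (S y))` with `y` in the support;
injectivity of `Y` there gives `y = x`, and then, since `T` and `S` preserve the support,
`T x = S x`.
-/

open MeasureTheory

namespace MeasureTheory.Measure

section

variable {X : Type*} [TopologicalSpace X] [MeasurableSpace X]

theorem msupport_eq_support (μ : Measure X) : msupport μ = μ.support := by
  ext x
  simp only [msupport, support_eq_forall_isOpen, Set.mem_ofPred_eq]
  exact forall_congr' fun _ => forall_comm

variable [OpensMeasurableSpace X] {Z : Type*} [TopologicalSpace Z] [MeasurableSpace Z]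
  [BorelSpace Z] {f : X → Z}

theorem image_support_subset_support_map (μ : Measure X) (hf : Continuous f) :
    f '' μ.support ⊆ (μ.map f).support := by
  rintro _ ⟨x, hx, rfl⟩
  rw [mem_support_iff_forall] at hx ⊢
  intro O hO
  exact (hx _ (hf.continuousAt.preimage_mem_nhds hO)).trans_le
    (le_map_apply hf.aemeasurable O)

theorem support_map_subset_image [HereditarilyLindelofSpace X] [T2Space Z] (μ : Measure X)
    (hf : Continuous f) (hμ : IsCompact μ.support) :
    (μ.map f).support ⊆ f '' μ.support := by
  have hclosed : IsClosed (f '' μ.support) := (hμ.image hf).isClosed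
  refine support_subset_of_isClosed hclosed ?_
  rw [mem_ae_map_iff hf.aemeasurable hclosed.measurableSet]
  exact Filter.mem_of_superset support_mem_ae (Set.subset_preimage_image f _)

end

theorem mapsTo_support_of_map_eq {X : Type*} [TopologicalSpace X] [MeasurableSpace X]
    [BorelSpace X] {μ : Measure X} {T : X → X} (hT : Continuous T) (hTinv : μ.map T = μ) :
    Set.MapsTo T μ.support μ.support := fun _ hx => by
  simpa only [hTinv] using image_support_subset_support_map μ hT ⟨_, hx, rfl⟩

end MeasureTheory.Measure

open Measure in
theorem eq_on_support_of_graph_measures_general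
    {n m : ℕ} (U : Set (EuclideanSpace ℝ (Fin n)))
    (T S : ↥U ≃ₜ ↥U)
    (μ : Measure ↥U)
    (hcpt : IsCompact (msupport μ))
    (hTinv : μ.map T = μ) (hSinv : μ.map S = μ)
    (Y : ↥U → EuclideanSpace ℝ (Fin m)) (hYc : Continuous Y)
    (hYinj : Set.InjOn Y (msupport μ))
    (hpush : μ.map (fun x => (Y x, Y (T x))) = μ.map (fun x => (Y x, Y (S x)))) :
    ∀ x ∈ msupport μ, T x = S x := by
  simp only [msupport_eq_support] at hcpt hYinj ⊢
  intro x hx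
  have hgraph : (Y x, Y (T x)) ∈ (μ.map fun y => (Y y, Y (S y))).support :=
    hpush ▸ image_support_subset_support_map μ (hYc.prodMk (hYc.comp T.continuous))
      ⟨x, hx, rfl⟩
  obtain ⟨y, hy, hyx⟩ :=
    support_map_subset_image μ (hYc.prodMk (hYc.comp S.continuous)) hcpt hgraph
  obtain ⟨hY, hYS⟩ := Prod.ext_iff.mp hyx
  obtain rfl := hYinj hy hx hY
  exact (hYinj (mapsTo_support_of_map_eq S.continuous hSinv hy)
    (mapsTo_support_of_map_eq T.continuous hTinv hy) hYS).symm

/-- If `μ` is a compactly supported Borel probability measure invariant under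
both `T` and `S`, `Y` is injective on `supp μ`, and the pushforwards of `μ`
under `x ↦ (Y x, Y (T x))` and `x ↦ (Y x, Y (S x))` coincide, then `T = S`
on `supp μ`. -/
theorem eq_on_support_of_graph_measures
    {n m : ℕ} (U : Set (EuclideanSpace ℝ (Fin n))) (hU : IsOpen U)
    (T S : ↥U ≃ₜ ↥U)
    (μ : Measure ↥U) [IsProbabilityMeasure μ]
    (hcpt : IsCompact (msupport μ))
    (hTinv : μ.map T = μ) (hSinv : μ.map S = μ)
    (Y : ↥U → EuclideanSpace ℝ (Fin m)) (hYc : Continuous Y)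
    (hYinj : Set.InjOn Y (msupport μ))
    (hpush : μ.map (fun x => (Y x, Y (T x))) = μ.map (fun x => (Y x, Y (S x)))) :
    ∀ x ∈ msupport μ, T x = S x :=
  eq_on_support_of_graph_measures_general U T S μ hcpt hTinv hSinv Y hYc hYinj hpush
end

section
/- Let T, S : U → U be homeomorphisms of an open set U ⊆ ℝⁿ, μ a T-invariant and ν an S-invariant Borel probability measure with compact supports. Let y : U → ℝ be continuous, m ∈ ℕ, and define the delay maps Ψ_T(x) = (y(x), y(T(x)), …, y(T^{m−1}(x))) and Ψ_S analogously. Assume Ψ_T is injective on supp(μ) and Ψ_S is injective on supp(ν). If the (m+1)-dimensional delay images coincide, i.e., Ψ_T^{(m+1)}(supp(μ)) = Ψ_S^{(m+1)}(supp(ν)) where Ψ_T^{(m+1)}(x) = (y(x), …, y(Tᵐ(x))), then the map Θ = (Ψ_T|_{supp(μ)})⁻¹ ∘ Ψ_S|_{supp(ν)} : supp(ν) → supp(μ) is a well-defined homeomorphism and S|_{supp(ν)} = Θ⁻¹ ∘ T|_{supp(μ)} ∘ Θ, i.e., T restricted to supp(μ) and S restricted to supp(ν) are topologically conjugate. -/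
open MeasureTheory

/-- The `k`-dimensional delay map of the observable `y` under dynamics `T`. -/
def delayMap {X : Type*} (y : X → ℝ) (T : X → X) (k : ℕ) :
    X → (Fin k → ℝ) :=
  fun x i => y (T^[(i : ℕ)] x)

lemma delayMap_continuous {X : Type*} [TopologicalSpace X] {y : X → ℝ} (hy : Continuous y)
    {T : X → X} (hT : Continuous T) (k : ℕ) : Continuous (delayMap y T k) :=
  continuous_pi fun i => hy.comp (hT.iterate i)

lemma delayMap_back {X : Type*} (y : X → ℝ) (T : X → X) (m : ℕ) (x : X) (i : Fin m) :
    delayMap y T m (T x) i = delayMap y T (m + 1) x i.succ := by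
  simp [delayMap, Function.iterate_succ_apply]

lemma mapsTo_msupport {n : ℕ} {U : Set (EuclideanSpace ℝ (Fin n))}
    (T : ↥U ≃ₜ ↥U) (μ : Measure ↥U) (hTinv : μ.map T = μ) :
    Set.MapsTo T (msupport μ) (msupport μ) := by
  intro x hx O hO hTx
  have hm : Measurable (T : ↥U → ↥U) := T.continuous.measurable
  have h1 : μ O = μ (T ⁻¹' O) := by
    conv_lhs => rw [← hTinv]
    rw [Measure.map_apply hm hO.measurableSet]
  rw [h1]
  exact hx _ (hO.preimage T.continuous) hTx

lemma cont_aux {X : Type*} [TopologicalSpace X] {α : Type*} [TopologicalSpace α] [T2Space α]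
    {K L : Set X} (hK : IsCompact K) {f g : X → α} (hf : Continuous f)
    (hg : Continuous g) (hfi : Set.InjOn f K) {Θ : X → X}
    (hmap : Set.MapsTo Θ L K) (heq : ∀ x ∈ L, f (Θ x) = g x) :
    ContinuousOn Θ L := by
  rw [continuousOn_iff_continuous_restrict]
  haveI : CompactSpace K := isCompact_iff_compactSpace.mp hK
  set F : K → α := fun k => f k with hF
  have hFc : Continuous F := hf.comp continuous_subtype_val
  have hFi : Function.Injective F := fun a b hab => Subtype.ext (hfi a.2 b.2 hab)
  have hec : Continuous (Equiv.ofInjective F hFi) := by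
    show Continuous fun k => Equiv.ofInjective F hFi k
    exact Continuous.subtype_mk hFc _
  let e : K ≃ₜ Set.range F := hec.homeoOfEquivCompactToT2
  have hgmem : ∀ x : L, g x ∈ Set.range F := fun x =>
    ⟨⟨Θ x, hmap x.2⟩, heq x x.2⟩
  have key : L.restrict Θ = fun x : L => (e.symm ⟨g x, hgmem x⟩ : X) := by
    funext x
    have h1 : F (e.symm ⟨g x, hgmem x⟩) = g x := by
      have h := e.apply_symm_apply ⟨g x, hgmem x⟩
      have : (e (e.symm ⟨g x, hgmem x⟩) : α) = g x := by rw [h]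
      exact this
    have h2 : f (Θ x) = g x := heq x x.2
    have h3 : ((e.symm ⟨g x, hgmem x⟩ : K) : X) = Θ ↑x :=
      hfi (e.symm ⟨g x, hgmem x⟩).2 (hmap x.2) (h1.trans h2.symm)
    exact h3.symm
  show Continuous (L.restrict Θ)
  rw [key]
  exact continuous_subtype_val.comp (e.symm.continuous.comp
    ((hg.comp continuous_subtype_val).subtype_mk _))

/-- Equality of the `(m+1)`-dimensional delay images implies that
`Θ = (Ψ_T|_{supp μ})⁻¹ ∘ Ψ_S|_{supp ν}` is a well-defined homeomorphism
conjugating `T|_{supp μ}` and `S|_{supp ν}`. -/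
theorem conjugacy_of_delay_image_eq
    {n : ℕ} (U : Set (EuclideanSpace ℝ (Fin n))) (hU : IsOpen U)
    (T S : ↥U ≃ₜ ↥U)
    (μ ν : Measure ↥U) [IsProbabilityMeasure μ] [IsProbabilityMeasure ν]
    (hTinv : μ.map T = μ) (hSinv : ν.map S = ν)
    (hμc : IsCompact (msupport μ)) (hνc : IsCompact (msupport ν))
    (y : ↥U → ℝ) (hy : Continuous y) (m : ℕ)
    (hTinj : Set.InjOn (delayMap y T m) (msupport μ))
    (hSinj : Set.InjOn (delayMap y S m) (msupport ν))
    (himg : delayMap y T (m + 1) '' msupport μ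
          = delayMap y S (m + 1) '' msupport ν) :
    ∃ Θ : ↥U → ↥U,
      Set.BijOn Θ (msupport ν) (msupport μ) ∧
      ContinuousOn Θ (msupport ν) ∧
      (∃ Θ' : ↥U → ↥U,
        Set.InvOn Θ' Θ (msupport ν) (msupport μ) ∧
        ContinuousOn Θ' (msupport μ)) ∧
      (∀ x ∈ msupport ν, delayMap y T m (Θ x) = delayMap y S m x) ∧
      (∀ x ∈ msupport ν, Θ (S x) = T (Θ x)) := by
  classical
  set K := msupport μ with hKdef
  set L := msupport ν with hLdef
  have hTK : Set.MapsTo T K K := mapsTo_msupport T μ hTinv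
  have hSL : Set.MapsTo S L L := mapsTo_msupport S ν hSinv
  set Θ : ↥U → ↥U := fun x =>
    if h : ∃ z, z ∈ K ∧ delayMap y T (m + 1) z = delayMap y S (m + 1) x then h.choose else x
    with hΘdef
  set Θ' : ↥U → ↥U := fun z =>
    if h : ∃ x, x ∈ L ∧ delayMap y S (m + 1) x = delayMap y T (m + 1) z then h.choose else z
    with hΘ'def
  have hΘspec : ∀ x ∈ L, Θ x ∈ K ∧ delayMap y T (m + 1) (Θ x) = delayMap y S (m + 1) x := by
    intro x hx
    have hmem : delayMap y S (m + 1) x ∈ delayMap y T (m + 1) '' K := by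
      rw [himg]; exact ⟨x, hx, rfl⟩
    obtain ⟨z, hz, hze⟩ := hmem
    have h : ∃ z, z ∈ K ∧ delayMap y T (m + 1) z = delayMap y S (m + 1) x := ⟨z, hz, hze⟩
    simp only [hΘdef, dif_pos h]
    exact h.choose_spec
  have hΘ'spec : ∀ z ∈ K, Θ' z ∈ L ∧ delayMap y S (m + 1) (Θ' z) = delayMap y T (m + 1) z := by
    intro z hz
    have hmem : delayMap y T (m + 1) z ∈ delayMap y S (m + 1) '' L := by
      rw [← himg]; exact ⟨z, hz, rfl⟩
    obtain ⟨x, hx, hxe⟩ := hmem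
    have h : ∃ x, x ∈ L ∧ delayMap y S (m + 1) x = delayMap y T (m + 1) z := ⟨x, hx, hxe⟩
    simp only [hΘ'def, dif_pos h]
    exact h.choose_spec
  have hΘm : ∀ x ∈ L, delayMap y T m (Θ x) = delayMap y S m x := by
    intro x hx
    funext i
    calc delayMap y T m (Θ x) i = delayMap y T (m + 1) (Θ x) i.castSucc := rfl
      _ = delayMap y S (m + 1) x i.castSucc := by rw [(hΘspec x hx).2]
      _ = delayMap y S m x i := rfl
  have hΘ'm : ∀ z ∈ K, delayMap y S m (Θ' z) = delayMap y T m z := by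
    intro z hz
    funext i
    calc delayMap y S m (Θ' z) i = delayMap y S (m + 1) (Θ' z) i.castSucc := rfl
      _ = delayMap y T (m + 1) z i.castSucc := by rw [(hΘ'spec z hz).2]
      _ = delayMap y T m z i := rfl
  have hΘmap : Set.MapsTo Θ L K := fun x hx => (hΘspec x hx).1
  have hΘ'map : Set.MapsTo Θ' K L := fun z hz => (hΘ'spec z hz).1
  have hinv1 : ∀ x ∈ L, Θ' (Θ x) = x := by
    intro x hx
    exact hSinj (hΘ'map (hΘmap hx)) hx (by rw [hΘ'm _ (hΘmap hx), hΘm x hx])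
  have hinv2 : ∀ z ∈ K, Θ (Θ' z) = z := by
    intro z hz
    exact hTinj (hΘmap (hΘ'map hz)) hz (by rw [hΘm _ (hΘ'map hz), hΘ'm z hz])
  have hInvOn : Set.InvOn Θ' Θ L K := ⟨hinv1, hinv2⟩
  refine ⟨Θ, hInvOn.bijOn hΘmap hΘ'map, ?_, ⟨Θ', hInvOn, ?_⟩, hΘm, ?_⟩
  · exact cont_aux hμc (delayMap_continuous hy T.continuous m)
      (delayMap_continuous hy S.continuous m) hTinj hΘmap hΘm
  · exact cont_aux hνc (delayMap_continuous hy S.continuous m)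
      (delayMap_continuous hy T.continuous m) hSinj hΘ'map hΘ'm
  · intro x hx
    have h1 : Θ (S x) ∈ K := hΘmap (hSL hx)
    have h2 : T (Θ x) ∈ K := hTK (hΘmap hx)
    refine hTinj h1 h2 ?_
    rw [hΘm _ (hSL hx)]
    funext i
    calc delayMap y S m (S x) i = delayMap y S (m + 1) x i.succ := delayMap_back y S m x i
      _ = delayMap y T (m + 1) (Θ x) i.succ := by rw [(hΘspec x hx).2]
      _ = delayMap y T m (T (Θ x)) i := (delayMap_back y T m (Θ x) i).symm
end

section
/- Let T, S : U → U be diffeomorphisms of an open set U ⊆ ℝⁿ, μ a Borel probability measure on U with compact support that is both T- and S-invariant. Suppose: (a) for each i = 1,…,m there is a homeomorphism Θᵢ : supp(μ) → supp(μ) given by Θᵢ = (Ψ_{(yᵢ,T)}^{(m)}|_{supp(μ)})⁻¹ ∘ Ψ_{(yᵢ,S)}^{(m)}|_{supp(μ)} with S|_{supp(μ)} = Θᵢ⁻¹ ∘ T|_{supp(μ)} ∘ Θᵢ; (b) there exists x* ∈ B_{μ,T} ∩ supp(μ) with Tᵏ(x*) = Sᵏ(x*) for 0 ≤ k ≤ m−1;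 (c) the map Y = (y₁,…,y_m) : U → ℝᵐ is injective on supp(μ). Then T = S everywhere on supp(μ). -/
open MeasureTheory Filter

/-- An invariant homeomorphism maps the support of the measure into itself. -/
lemma msupport_mapsTo {X : Type*} [TopologicalSpace X] [MeasurableSpace X]
    [BorelSpace X] (μ : Measure X) (f : X ≃ₜ X) (hf : μ.map f = μ) :
    ∀ z ∈ msupport μ, f z ∈ msupport μ := by
  intro z hz O hO hfz
  have h1 : IsOpen (f ⁻¹' O) := hO.preimage f.continuous
  have h2 : μ O = μ (f ⁻¹' O) := by
    conv_lhs => rw [← hf]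
    exact Measure.map_apply f.continuous.measurable hO.measurableSet
  rw [h2]
  exact hz _ h1 hfz

/-- Unique identification from multiple delay-coordinate conjugacies: if for
each observable `yᵢ` the map `Θᵢ = (Ψ_{(yᵢ,T)}|_{supp μ})⁻¹ ∘ Ψ_{(yᵢ,S)}|_{supp μ}`
conjugates `S` and `T` on `supp μ`, if the orbits of a basin point `x*` agree
for the first `m` steps, and if `Y = (y₁,…,y_m)` is injective on `supp μ`,
then `T = S` everywhere on `supp μ`. -/
theorem eq_of_multiple_delay_conjugacies
    {n m : ℕ} (U : Set (EuclideanSpace ℝ (Fin n))) (hU : IsOpen U)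
    (T S : ↥U ≃ₜ ↥U)
    (μ : Measure ↥U) [IsProbabilityMeasure μ]
    (hcpt : IsCompact (msupport μ))
    (hTinv : μ.map T = μ) (hSinv : μ.map S = μ)
    (y : Fin m → (↥U → ℝ)) (hy : ∀ i, Continuous (y i))
    (hTinj : ∀ i, Set.InjOn (delayMap (y i) T m) (msupport μ))
    (Θ : Fin m → (↥U → ↥U))
    (hΘbij : ∀ i, Set.BijOn (Θ i) (msupport μ) (msupport μ))
    (hΘdef : ∀ i, ∀ x ∈ msupport μ,
      delayMap (y i) T m ((Θ i) x) = delayMap (y i) S m x)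
    (hΘconj : ∀ i, ∀ x ∈ msupport μ, (Θ i) (S x) = T ((Θ i) x))
    (xstar : ↥U) (hxsupp : xstar ∈ msupport μ)
    (hbasin : ∀ φ : C(↥U, ℝ),
      Tendsto (fun N : ℕ => (N : ℝ)⁻¹ * ∑ k ∈ Finset.range N, φ ((⇑T)^[k] xstar))
        atTop (nhds (∫ x, φ x ∂μ)))
    (horbit : ∀ k : ℕ, k ≤ m - 1 → (⇑T)^[k] xstar = (⇑S)^[k] xstar)
    (hYinj : Set.InjOn (fun x (i : Fin m) => y i x) (msupport μ)) :
    ∀ x ∈ msupport μ, T x = S x := by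
  have hUmeas : MeasurableSet U := hU.measurableSet
  have hTsuppMap := msupport_mapsTo μ T hTinv
  have hSsuppMap := msupport_mapsTo μ S hSinv
  intro x hx
  rcases Nat.eq_zero_or_pos m with hm0 | hm
  · -- m = 0: the (empty) observation map being injective forces supp μ trivial
    refine hYinj (hTsuppMap x hx) (hSsuppMap x hx) (funext fun i => ?_)
    subst hm0; exact i.elim0
  -- m > 0
  -- iterates of x* under S and T stay in the support
  have hSsupp : ∀ k, (⇑S)^[k] xstar ∈ msupport μ := by
    intro k; induction k with
    | zero => simpa using hxsupp
    | succ k ih => rw [Function.iterate_succ_apply']; exact hSsuppMap _ ih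
  have hTsupp : ∀ k, (⇑T)^[k] xstar ∈ msupport μ := by
    intro k; induction k with
    | zero => simpa using hxsupp
    | succ k ih => rw [Function.iterate_succ_apply']; exact hTsuppMap _ ih
  -- each Θ i fixes x*
  have hfix : ∀ i, Θ i xstar = xstar := by
    intro i
    have h1 := hΘdef i xstar hxsupp
    have h2 : delayMap (y i) S m xstar = delayMap (y i) T m xstar := by
      funext j
      simp only [delayMap]
      rw [← horbit j (Nat.le_pred_of_lt j.isLt)]
    exact hTinj i ((hΘbij i).mapsTo hxsupp) hxsupp (h1.trans h2)
  -- Θ i maps the S-orbit of x* to the T-orbit of x*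
  have hΘorb : ∀ i k, Θ i ((⇑S)^[k] xstar) = (⇑T)^[k] xstar := by
    intro i k; induction k with
    | zero => simpa using hfix i
    | succ k ih =>
        rw [Function.iterate_succ_apply', hΘconj i _ (hSsupp k), ih]
        exact (Function.iterate_succ_apply' _ _ _).symm
  -- the full orbits of x* under T and S agree
  have horbitall : ∀ k, (⇑T)^[k] xstar = (⇑S)^[k] xstar := by
    intro k
    refine hYinj (hTsupp k) (hSsupp k) (funext fun i => ?_)
    have h1 := congrFun (hΘdef i ((⇑S)^[k] xstar) (hSsupp k)) ⟨0, hm⟩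
    simpa [delayMap, hΘorb i k] using h1
  -- the T-orbit of x* visits every open set meeting the support
  have hdense : ∀ z ∈ msupport μ, ∀ O : Set ↥U, IsOpen O → z ∈ O →
      ∃ k, (⇑T)^[k] xstar ∈ O := by
    intro z hz O hO hzO
    by_contra h
    push_neg at h
    obtain ⟨r, hr, hball⟩ := (Metric.nhds_basis_closedBall.mem_iff).1 (hO.mem_nhds hzO)
    obtain ⟨f, hf0, hf1, hf01⟩ := exists_continuous_zero_one_of_isClosed
      hO.isClosed_compl Metric.isClosed_closedBall
      (Set.disjoint_left.2 fun w hw hw2 => hw (hball hw2))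
    have hint : Integrable (⇑f) μ := by
      refine (integrable_const (1 : ℝ)).mono' f.continuous.aestronglyMeasurable
        (Eventually.of_forall fun w => ?_)
      have hw := hf01 w
      rw [Real.norm_eq_abs, abs_of_nonneg hw.1]
      exact hw.2
    have hμball : 0 < μ (Metric.closedBall z r) :=
      lt_of_lt_of_le (hz _ Metric.isOpen_ball (Metric.mem_ball_self hr))
        (measure_mono Metric.ball_subset_closedBall)
    have hpos : 0 < ∫ w, f w ∂μ := by
      have h1 : ∫ w in Metric.closedBall z r, f w ∂μ
          = (μ (Metric.closedBall z r)).toReal := by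
        rw [setIntegral_congr_fun measurableSet_closedBall hf1]
        simp
        rfl
      have h2 : ∫ w in Metric.closedBall z r, f w ∂μ ≤ ∫ w, f w ∂μ :=
        setIntegral_le_integral hint (Eventually.of_forall fun w => (hf01 w).1)
      have h3 : 0 < (μ (Metric.closedBall z r)).toReal :=
        ENNReal.toReal_pos hμball.ne' (measure_ne_top μ _)
      linarith
    have hzero := hbasin f
    have heq : (fun N : ℕ => (N : ℝ)⁻¹ * ∑ k ∈ Finset.range N, f ((⇑T)^[k] xstar))
        = fun _ : ℕ => (0 : ℝ) := by
      funext N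
      rw [Finset.sum_eq_zero, mul_zero]
      intro k _
      exact hf0 (h k)
    rw [heq] at hzero
    have := tendsto_nhds_unique hzero tendsto_const_nhds
    linarith
  -- conclude: T = S on the closure of the orbit, which contains x
  have hE : IsClosed {z : ↥U | T z = S z} := isClosed_eq T.continuous S.continuous
  have horbE : Set.range (fun k => (⇑T)^[k] xstar) ⊆ {z : ↥U | T z = S z} := by
    rintro _ ⟨k, rfl⟩
    show T ((⇑T)^[k] xstar) = S ((⇑T)^[k] xstar)
    calc T ((⇑T)^[k] xstar) = (⇑T)^[k + 1] xstar :=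
          (Function.iterate_succ_apply' _ _ _).symm
      _ = (⇑S)^[k + 1] xstar := horbitall _
      _ = S ((⇑S)^[k] xstar) := Function.iterate_succ_apply' _ _ _
      _ = S ((⇑T)^[k] xstar) := by rw [horbitall k]
  have hxcl : x ∈ closure (Set.range fun k => (⇑T)^[k] xstar) := by
    rw [mem_closure_iff]
    intro O hO hxO
    obtain ⟨k, hk⟩ := hdense x hx O hO hxO
    exact ⟨_, hk, ⟨k, rfl⟩⟩
  exact closure_minimal horbE hE hxcl
end
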